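/- Suppose b : ℝⁿ → ℝ is smooth with |b(x)| ≤ C⟨x⟩^{−σ} and |∇b(x)| ≤ C⟨x⟩^{−σ−1} for some σ > 0, and let q(x,ξ) = b(x) ξ_j ξ_k for fixed indices j,k. Then for A_{lm}(x,ξ) = (x_l ξ_m − x_m ξ_l)/⟨ξ⟩ the Poisson bracket satisfies |{q, A_{lm}}(x,ξ)| ≤ C' |ξ| ⟨x⟩^{−σ} for all (x,ξ), for some constant C' depending on C, n. -/

import Mathlib

/-- The Poisson bracket `{f,g} = Σ_i (∂_{ξ_i} f · ∂_{x_i} g − ∂_{x_i} f · ∂_{ξ_i} g)`. -/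
noncomputable def poissonBracket {n : ℕ} (f g : (Fin n → ℝ) × (Fin n → ℝ) → ℝ)
    (x ξ : Fin n → ℝ) : ℝ :=
  ∑ i, (deriv (fun t => f (x, Function.update ξ i t)) (ξ i) *
          deriv (fun t => g (Function.update x i t, ξ)) (x i) -
        deriv (fun t => f (Function.update x i t, ξ)) (x i) *
          deriv (fun t => g (x, Function.update ξ i t)) (ξ i))

set_option maxHeartbeats 1600000 in
/-- If `b` is smooth with `|b(x)| ≤ C⟨x⟩^{−σ}`, `|∇b(x)| ≤ C⟨x⟩^{−σ−1}` for some `σ > 0`,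
and `q(x,ξ) = b(x)ξ_jξ_k`, then for `A_{lm}(x,ξ) = (x_lξ_m − x_mξ_l)/⟨ξ⟩` one has
`|{q, A_{lm}}(x,ξ)| ≤ C'|ξ|⟨x⟩^{−σ}`. -/
theorem stmt6 (n : ℕ) (σ C : ℝ) (hσ : 0 < σ) (hC : 0 < C)
    (b : (Fin n → ℝ) → ℝ) (hb : ContDiff ℝ (⊤ : ℕ∞) b)
    (hb_bd : ∀ x : Fin n → ℝ, |b x| ≤ C * Real.sqrt (1 + ∑ i, (x i) ^ 2) ^ (-σ))
    (hb'_bd : ∀ x : Fin n → ℝ,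
      ‖fderiv ℝ b x‖ ≤ C * Real.sqrt (1 + ∑ i, (x i) ^ 2) ^ (-σ - 1))
    (j k l m : Fin n)
    (q A : (Fin n → ℝ) × (Fin n → ℝ) → ℝ)
    (hq : ∀ z : (Fin n → ℝ) × (Fin n → ℝ), q z = b z.1 * z.2 j * z.2 k)
    (hA : ∀ z : (Fin n → ℝ) × (Fin n → ℝ),
      A z = (z.1 l * z.2 m - z.1 m * z.2 l) / Real.sqrt (1 + ∑ i, (z.2 i) ^ 2)) :
    ∃ C' : ℝ, 0 < C' ∧ ∀ x ξ : Fin n → ℝ,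
      |poissonBracket q A x ξ| ≤
        C' * Real.sqrt (∑ i, (ξ i) ^ 2) * Real.sqrt (1 + ∑ i, (x i) ^ 2) ^ (-σ) := by
  refine ⟨8 * C * (n + 1), by positivity, ?_⟩
  intro x ξ
  have hSx0 : (0:ℝ) ≤ ∑ i, (x i)^2 := Finset.sum_nonneg fun _ _ => sq_nonneg _
  have hSξ0 : (0:ℝ) ≤ ∑ i, (ξ i)^2 := Finset.sum_nonneg fun _ _ => sq_nonneg _
  set Sx := ∑ i, (x i)^2 with hSxdef
  set Sξ := ∑ i, (ξ i)^2 with hSξdef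
  set Nx := Real.sqrt (1 + Sx) with hNxdef
  set Nξ := Real.sqrt (1 + Sξ) with hNξdef
  set nξ := Real.sqrt Sξ with hnξdef
  have hNx1 : 1 ≤ Nx := by
    nlinarith [Real.sq_sqrt (show (0:ℝ) ≤ 1 + Sx by linarith), Real.sqrt_nonneg (1 + Sx)]
  have hNξ1 : 1 ≤ Nξ := by
    nlinarith [Real.sq_sqrt (show (0:ℝ) ≤ 1 + Sξ by linarith), Real.sqrt_nonneg (1 + Sξ)]
  have hNx0 : 0 < Nx := lt_of_lt_of_le one_pos hNx1
  have hNξ0 : 0 < Nξ := lt_of_lt_of_le one_pos hNξ1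
  have hnξ0 : 0 ≤ nξ := Real.sqrt_nonneg _
  have hnN : nξ ≤ Nξ := Real.sqrt_le_sqrt (by linarith)
  have hxp : ∀ p, |x p| ≤ Nx := by
    intro p
    rw [← Real.sqrt_sq_eq_abs]
    apply Real.sqrt_le_sqrt
    have := Finset.single_le_sum (f := fun p => (x p)^2) (fun _ _ => sq_nonneg _)
      (Finset.mem_univ p)
    rw [← hSxdef] at this
    linarith
  have hξp : ∀ p, |ξ p| ≤ nξ := by
    intro p
    rw [← Real.sqrt_sq_eq_abs]
    apply Real.sqrt_le_sqrt
    have := Finset.single_le_sum (f := fun p => (ξ p)^2) (fun _ _ => sq_nonneg _)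
      (Finset.mem_univ p)
    rw [← hSξdef] at this
    linarith
  have hP0 : (0:ℝ) ≤ Nx ^ (-σ) := Real.rpow_nonneg (le_of_lt hNx0) _
  have hifle : ∀ (P : Prop) [Decidable P] (a : ℝ), |if P then a else 0| ≤ |a| := by
    intro P _ a
    split_ifs <;> simp [abs_nonneg]
  -- bounds on b
  have hb1 : |b x| ≤ C * Nx ^ (-σ) := by
    have := hb_bd x
    rw [← hSxdef, ← hNxdef] at this
    exact this
  have hb2 : ‖fderiv ℝ b x‖ ≤ C * Nx ^ (-σ - 1) := by
    have := hb'_bd x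
    rw [← hSxdef, ← hNxdef] at this
    exact this
  have key : ∀ i : Fin n,
      |deriv (fun t => q (x, Function.update ξ i t)) (ξ i) *
          deriv (fun t => A (Function.update x i t, ξ)) (x i) -
        deriv (fun t => q (Function.update x i t, ξ)) (x i) *
          deriv (fun t => A (x, Function.update ξ i t)) (ξ i)|
        ≤ 8 * C * nξ * Nx ^ (-σ) := by
    intro i
    -- ∂_{ξ_i} q
    have hD1 : deriv (fun t => q (x, Function.update ξ i t)) (ξ i)
        = b x * ((if j = i then ξ k else 0) + (if k = i then ξ j else 0)) := by
      have e1 : (fun t => q (x, Function.update ξ i t))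
          = fun t => b x * (if j = i then t else ξ j) * (if k = i then t else ξ k) := by
        funext t
        rw [hq]
        simp [Function.update_apply]
      rw [e1]
      by_cases hj : j = i
      · by_cases hk : k = i
        · simp only [if_pos hj, if_pos hk]
          have h : HasDerivAt (fun t : ℝ => b x * t * t)
              (b x * 1 * ξ i + b x * ξ i * 1) (ξ i) :=
            ((hasDerivAt_id (ξ i)).const_mul (b x)).mul (hasDerivAt_id (ξ i))
          rw [h.deriv, hj, hk]; ring
        · simp only [if_pos hj, if_neg hk]
          have h : HasDerivAt (fun t : ℝ => b x * t * ξ k) (b x * 1 * ξ k) (ξ i) :=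
            ((hasDerivAt_id (ξ i)).const_mul (b x)).mul_const (ξ k)
          rw [h.deriv]; ring
      · by_cases hk : k = i
        · simp only [if_neg hj, if_pos hk]
          have h : HasDerivAt (fun t : ℝ => b x * ξ j * t) (b x * ξ j * 1) (ξ i) :=
            (hasDerivAt_id (ξ i)).const_mul (b x * ξ j)
          rw [h.deriv]; ring
        · simp only [if_neg hj, if_neg hk]
          simp
    -- ∂_{x_i} A
    have hD2 : deriv (fun t => A (Function.update x i t, ξ)) (x i)
        = ((if l = i then ξ m else 0) - (if m = i then ξ l else 0)) / Nξ := by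
      have e2 : (fun t => A (Function.update x i t, ξ))
          = fun t => ((if l = i then t else x l) * ξ m
              - (if m = i then t else x m) * ξ l) / Nξ := by
        funext t
        rw [hA, hNξdef, hSξdef]
        simp [Function.update_apply]
      rw [e2]
      have hvl : HasDerivAt (fun t : ℝ => if l = i then t else x l)
          (if l = i then 1 else 0) (x i) := by
        split_ifs
        · exact hasDerivAt_id _
        · exact hasDerivAt_const _ _
      have hvm : HasDerivAt (fun t : ℝ => if m = i then t else x m)
          (if m = i then 1 else 0) (x i) := by
        split_ifs
        · exact hasDerivAt_id _
        · exact hasDerivAt_const _ _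
      have h : HasDerivAt
          (fun t : ℝ => ((if l = i then t else x l) * ξ m
              - (if m = i then t else x m) * ξ l) / Nξ)
          (((if l = i then 1 else 0) * ξ m - (if m = i then 1 else 0) * ξ l) / Nξ) (x i) :=
        ((hvl.mul_const (ξ m)).sub (hvm.mul_const (ξ l))).div_const Nξ
      rw [h.deriv]
      congr 1
      split_ifs <;> ring
    -- ∂_{x_i} q
    have hγ : HasDerivAt (fun t : ℝ => Function.update x i t) (Pi.single i 1) (x i) := by
      apply hasDerivAt_pi.mpr
      intro p
      by_cases hp : p = i
      · subst hp
        simp only [Function.update_apply, if_pos rfl, Pi.single_eq_same]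
        exact hasDerivAt_id _
      · simp only [Function.update_apply, if_neg hp, Pi.single_eq_of_ne hp]
        exact hasDerivAt_const _ _
    have hbd : HasDerivAt (fun t => b (Function.update x i t))
        (fderiv ℝ b x (Pi.single i 1)) (x i) := by
      have hfd : HasFDerivAt b (fderiv ℝ b x) (Function.update x i (x i)) := by
        rw [Function.update_eq_self]
        exact (hb.differentiable (by simp) x).hasFDerivAt
      exact hfd.comp_hasDerivAt _ hγ
    have hD3 : deriv (fun t => q (Function.update x i t, ξ)) (x i)
        = fderiv ℝ b x (Pi.single i 1) * ξ j * ξ k := by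
      have e3 : (fun t => q (Function.update x i t, ξ))
          = fun t => b (Function.update x i t) * ξ j * ξ k := by
        funext t; rw [hq]
      rw [e3]
      exact ((hbd.mul_const (ξ j)).mul_const (ξ k)).deriv
    -- ∂_{ξ_i} A
    have hc : ∀ t : ℝ, (1 + ∑ p, (Function.update ξ i t p)^2 : ℝ)
        = (1 + Sξ - (ξ i)^2) + t^2 := by
      intro t
      have h1 : ∀ p : Fin n, (Function.update ξ i t p)^2
          = Function.update (fun p => (ξ p : ℝ)^2) i (t^2) p := fun p =>
        (Function.apply_update (fun _ y => y^2) ξ i t p)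
      rw [Finset.sum_congr rfl fun p _ => h1 p,
        Finset.sum_update_of_mem (Finset.mem_univ i),
        Finset.sum_sdiff_eq_sub (Finset.subset_univ {i}), Finset.sum_singleton, ← hSξdef]
      ring
    have e4 : (fun t => A (x, Function.update ξ i t))
        = fun t => (x l * (if m = i then t else ξ m)
            - x m * (if l = i then t else ξ l))
          / Real.sqrt ((1 + Sξ - (ξ i)^2) + t^2) := by
      funext t
      rw [hA]
      rw [show (1 + ∑ p, (Function.update ξ i t p)^2 : ℝ)
          = (1 + Sξ - (ξ i)^2) + t^2 from hc t]
      simp [Function.update_apply]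
    have hNeq : Real.sqrt ((1 + Sξ - (ξ i)^2) + (ξ i)^2) = Nξ := by
      rw [hNξdef]; congr 1; ring
    have hvl' : HasDerivAt (fun t : ℝ => if l = i then t else ξ l)
        (if l = i then 1 else 0) (ξ i) := by
      split_ifs
      · exact hasDerivAt_id _
      · exact hasDerivAt_const _ _
    have hvm' : HasDerivAt (fun t : ℝ => if m = i then t else ξ m)
        (if m = i then 1 else 0) (ξ i) := by
      split_ifs
      · exact hasDerivAt_id _
      · exact hasDerivAt_const _ _
    have hnum : HasDerivAt (fun t : ℝ => x l * (if m = i then t else ξ m)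
        - x m * (if l = i then t else ξ l))
        (x l * (if m = i then 1 else 0) - x m * (if l = i then 1 else 0)) (ξ i) :=
      (hvm'.const_mul (x l)).sub (hvl'.const_mul (x m))
    have hden : HasDerivAt (fun t : ℝ => Real.sqrt ((1 + Sξ - (ξ i)^2) + t^2))
        ((2 * ξ i) / (2 * Real.sqrt ((1 + Sξ - (ξ i)^2) + (ξ i)^2))) (ξ i) := by
      have h1 : HasDerivAt (fun t : ℝ => (1 + Sξ - (ξ i)^2) + t^2) (2 * ξ i) (ξ i) := by
        simpa using (hasDerivAt_pow 2 (ξ i)).const_add (1 + Sξ - (ξ i)^2)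
      apply h1.sqrt
      have : (0:ℝ) < (1 + Sξ - (ξ i)^2) + (ξ i)^2 := by
        have h2 : ((ξ i)^2 : ℝ) = (ξ i)^2 := rfl
        nlinarith [hSξ0]
      linarith
    have hdiv := hnum.div hden (by rw [hNeq]; exact hNξ0.ne')
    have hD4 : deriv (fun t => A (x, Function.update ξ i t)) (ξ i)
        = ((x l * (if m = i then 1 else 0) - x m * (if l = i then 1 else 0)) * Nξ
            - (x l * ξ m - x m * ξ l) * (2 * ξ i / (2 * Nξ))) / Nξ ^ 2 := by
      rw [e4, show (fun t : ℝ => (x l * (if m = i then t else ξ m) - x m * (if l = i then t else ξ l)) / Real.sqrt ((1 + Sξ - (ξ i)^2) + t^2)) = (fun t : ℝ => x l * (if m = i then t else ξ m) - x m * (if l = i then t else ξ l)) / (fun t : ℝ => Real.sqrt ((1 + Sξ - (ξ i)^2) + t^2)) from rfl, hdiv.deriv, hNeq]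
      have him : (if m = i then ξ i else ξ m) = ξ m := by
        split_ifs with h
        · rw [h]
        · rfl
      have hil : (if l = i then ξ i else ξ l) = ξ l := by
        split_ifs with h
        · rw [h]
        · rfl
      rw [him, hil]
    -- now bound everything
    rw [hD1, hD2, hD3, hD4]
    have hE1 : |(if j = i then ξ k else 0) + (if k = i then ξ j else 0)| ≤ 2 * nξ := by
      calc |(if j = i then ξ k else 0) + (if k = i then ξ j else 0)|
          ≤ |if j = i then ξ k else 0| + |if k = i then ξ j else 0| := abs_add_le _ _
        _ ≤ nξ + nξ := add_le_add (le_trans (hifle _ _) (hξp k)) (le_trans (hifle _ _) (hξp j))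
        _ = 2 * nξ := by ring
    have hE2 : |((if l = i then ξ m else 0) - (if m = i then ξ l else 0)) / Nξ| ≤ 2 := by
      rw [abs_div, abs_of_pos hNξ0, div_le_iff₀ hNξ0]
      calc |(if l = i then ξ m else 0) - (if m = i then ξ l else 0)|
          ≤ |if l = i then ξ m else 0| + |if m = i then ξ l else 0| := abs_sub _ _
        _ ≤ nξ + nξ := add_le_add (le_trans (hifle _ _) (hξp m)) (le_trans (hifle _ _) (hξp l))
        _ ≤ 2 * Nξ := by linarith
    have hterm1 : |b x * ((if j = i then ξ k else 0) + (if k = i then ξ j else 0)) *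
        (((if l = i then ξ m else 0) - (if m = i then ξ l else 0)) / Nξ)|
        ≤ 4 * C * nξ * Nx ^ (-σ) := by
      rw [abs_mul, abs_mul]
      calc |b x| * |(if j = i then ξ k else 0) + (if k = i then ξ j else 0)| *
            |((if l = i then ξ m else 0) - (if m = i then ξ l else 0)) / Nξ|
          ≤ (C * Nx ^ (-σ)) * (2 * nξ) * 2 :=
            mul_le_mul (mul_le_mul hb1 hE1 (abs_nonneg _) (by positivity)) hE2
              (abs_nonneg _) (by positivity)
        _ = 4 * C * nξ * Nx ^ (-σ) := by ring
    have hDb : |fderiv ℝ b x (Pi.single i 1)| ≤ C * Nx ^ (-σ - 1) := by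
      calc |fderiv ℝ b x (Pi.single i 1)|
          ≤ ‖fderiv ℝ b x‖ * ‖(Pi.single i 1 : Fin n → ℝ)‖ :=
            (fderiv ℝ b x).le_opNorm _
        _ = ‖fderiv ℝ b x‖ := by rw [Pi.norm_single]; simp
        _ ≤ C * Nx ^ (-σ - 1) := hb2
    have hE4 : |((x l * (if m = i then 1 else 0) - x m * (if l = i then 1 else 0)) * Nξ
        - (x l * ξ m - x m * ξ l) * (2 * ξ i / (2 * Nξ))) / Nξ ^ 2| ≤ 4 * Nx / Nξ := by
      have hnum4 : |(x l * (if m = i then 1 else 0) - x m * (if l = i then 1 else 0)) * Nξ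
          - (x l * ξ m - x m * ξ l) * (2 * ξ i / (2 * Nξ))| ≤ 4 * Nx * Nξ := by
        have ha : |(x l * (if m = i then 1 else 0) - x m * (if l = i then 1 else 0))| ≤ 2 * Nx := by
          calc |x l * (if m = i then 1 else 0) - x m * (if l = i then 1 else 0)|
              ≤ |x l * (if m = i then 1 else 0)| + |x m * (if l = i then 1 else 0)| :=
                abs_sub _ _
            _ ≤ |x l| * 1 + |x m| * 1 := by
                rw [abs_mul, abs_mul]
                apply add_le_add <;>
                  exact mul_le_mul_of_nonneg_left (by split_ifs <;> simp) (abs_nonneg _)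
            _ ≤ 2 * Nx := by
                have := hxp l; have := hxp m; linarith
        have hbnum : |x l * ξ m - x m * ξ l| ≤ 2 * Nx * Nξ := by
          calc |x l * ξ m - x m * ξ l| ≤ |x l * ξ m| + |x m * ξ l| := abs_sub _ _
            _ ≤ Nx * nξ + Nx * nξ := by
                rw [abs_mul, abs_mul]
                exact add_le_add (mul_le_mul (hxp l) (hξp m) (abs_nonneg _) (by linarith))
                  (mul_le_mul (hxp m) (hξp l) (abs_nonneg _) (by linarith))
            _ ≤ 2 * Nx * Nξ := by nlinarith
        have hfrac : |2 * ξ i / (2 * Nξ)| ≤ 1 := by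
          rw [abs_div, abs_of_pos (by linarith : (0:ℝ) < 2 * Nξ), div_le_one (by linarith)]
          have := hξp i
          rw [abs_mul]
          simp only [abs_two]
          nlinarith [abs_nonneg (ξ i)]
        calc |(x l * (if m = i then 1 else 0) - x m * (if l = i then 1 else 0)) * Nξ
            - (x l * ξ m - x m * ξ l) * (2 * ξ i / (2 * Nξ))|
            ≤ |(x l * (if m = i then 1 else 0) - x m * (if l = i then 1 else 0)) * Nξ|
              + |(x l * ξ m - x m * ξ l) * (2 * ξ i / (2 * Nξ))| := abs_sub _ _
          _ ≤ (2 * Nx) * Nξ + (2 * Nx * Nξ) * 1 := by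
              rw [abs_mul, abs_mul, abs_of_pos hNξ0]
              exact add_le_add (mul_le_mul_of_nonneg_right ha (le_of_lt hNξ0))
                (mul_le_mul hbnum hfrac (abs_nonneg _) (by nlinarith))
          _ = 4 * Nx * Nξ := by ring
      rw [abs_div, abs_of_pos (pow_pos hNξ0 2),
        show 4 * Nx / Nξ = (4 * Nx * Nξ) / Nξ ^ 2 by field_simp]
      gcongr
    have hterm2 : |fderiv ℝ b x (Pi.single i 1) * ξ j * ξ k *
        (((x l * (if m = i then 1 else 0) - x m * (if l = i then 1 else 0)) * Nξ
            - (x l * ξ m - x m * ξ l) * (2 * ξ i / (2 * Nξ))) / Nξ ^ 2)|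
        ≤ 4 * C * nξ * Nx ^ (-σ) := by
      rw [abs_mul, abs_mul, abs_mul]
      have step : |fderiv ℝ b x (Pi.single i 1)| * |ξ j| * |ξ k| *
          |((x l * (if m = i then 1 else 0) - x m * (if l = i then 1 else 0)) * Nξ
            - (x l * ξ m - x m * ξ l) * (2 * ξ i / (2 * Nξ))) / Nξ ^ 2|
          ≤ (C * Nx ^ (-σ - 1)) * nξ * nξ * (4 * Nx / Nξ) := by
        apply mul_le_mul _ hE4 (abs_nonneg _) (by positivity)
        exact mul_le_mul (mul_le_mul hDb (hξp j) (abs_nonneg _) (by positivity))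
          (hξp k) (abs_nonneg _) (by positivity)
      refine step.trans ?_
      have hr : Nx ^ (-σ - 1) * Nx = Nx ^ (-σ) := by
        rw [← Real.rpow_add_one hNx0.ne' (-σ - 1)]
        norm_num
      rw [show (C * Nx ^ (-σ - 1)) * nξ * nξ * (4 * Nx / Nξ)
          = (4 * C * (Nx ^ (-σ - 1) * Nx) * nξ * nξ) / Nξ by ring, hr,
        div_le_iff₀ hNξ0]
      nlinarith [mul_le_mul_of_nonneg_left hnN
        (show (0:ℝ) ≤ 4 * C * Nx ^ (-σ) * nξ by positivity)]
    calc |b x * ((if j = i then ξ k else 0) + (if k = i then ξ j else 0)) *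
          (((if l = i then ξ m else 0) - (if m = i then ξ l else 0)) / Nξ)
          - fderiv ℝ b x (Pi.single i 1) * ξ j * ξ k *
          (((x l * (if m = i then 1 else 0) - x m * (if l = i then 1 else 0)) * Nξ
            - (x l * ξ m - x m * ξ l) * (2 * ξ i / (2 * Nξ))) / Nξ ^ 2)|
        ≤ _ + _ := abs_sub _ _
      _ ≤ 4 * C * nξ * Nx ^ (-σ) + 4 * C * nξ * Nx ^ (-σ) := add_le_add hterm1 hterm2
      _ = 8 * C * nξ * Nx ^ (-σ) := by ring
  -- assemble
  simp only [poissonBracket]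
  refine le_trans (Finset.abs_sum_le_sum_abs _ _) ?_
  refine le_trans (Finset.sum_le_sum (fun i _ => key i)) ?_
  rw [Finset.sum_const, Finset.card_univ, Fintype.card_fin, nsmul_eq_mul]
  nlinarith [mul_le_mul_of_nonneg_right (show (n:ℝ) ≤ n + 1 by linarith)
    (show (0:ℝ) ≤ 8 * C * nξ * Nx ^ (-σ) by positivity)]
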